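/- arXiv:2111.09812 — 3 statements merged into one kernel-verified Lean document; each statement's English description precedes it below -/
import Mathlib

section
/- Let θ₀, θ∞ be complex constants and let U ⊆ ℂ be an open set not containing 0. Suppose f, g : ℂ → ℂ are differentiable on U and satisfy the Its–Prokhorov Hamiltonian system f'(t) = (4 f(t)² g(t) + 2t − 2t f(t)² + (4θ∞ − 1) f(t))/t and g'(t) = −(4 f(t) g(t)² + (4θ∞ − 1 − 4 t f(t)) g(t) − 2t(θ₀ + θ∞))/t for all t ∈ U, and that f(t) ≠ 0 on U. Then f satisfies the third Painlevé equation f''(t) = f'(t)²/f(t) − f'(t)/t + (α f(t)² + β)/t + γ f(t)³ + δ/f(t) on U with parameters α = 8θ₀, β = 4 − 8θ∞, γ = 4, δ = −4. -/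
/-!
Since `U` is open, `deriv f` agrees near each point with `s ↦ ∂H/∂g (s, f s, g s)`, so `f''`
comes from the chain rule applied to `∂H/∂g` along the flow, with `f' = ∂H/∂g` and
`g' = -∂H/∂f`. After this substitution `g` cancels and what remains is the PIII right-hand
side in `t`, `f`, `f'`: a rational identity with denominators `t` and `f`.
-/

/-- The right-hand side of PIII, `x'' = painleveIIIRhs α β γ δ t x x'`. -/
noncomputable def painleveIIIRhs (α β γ δ t x x' : ℂ) : ℂ :=
  x' ^ 2 / x - x' / t + (α * x ^ 2 + β) / t + γ * x ^ 3 + δ / x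

/-- `∂H/∂g` for the Its–Prokhorov Hamiltonian `H`. -/
noncomputable def itsProkhorovF (θinf t f g : ℂ) : ℂ :=
  (4 * f ^ 2 * g + 2 * t - 2 * t * f ^ 2 + (4 * θinf - 1) * f) / t

/-- `-∂H/∂f` for the Its–Prokhorov Hamiltonian `H`. -/
noncomputable def itsProkhorovG (θ₀ θinf t f g : ℂ) : ℂ :=
  -((4 * f * g ^ 2 + (4 * θinf - 1 - 4 * t * f) * g - 2 * t * (θ₀ + θinf)) / t)

theorem deriv_deriv_eq_of_hasDerivAt {𝕜 E : Type*} [NontriviallyNormedField 𝕜]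
    [NormedAddCommGroup E] [NormedSpace 𝕜 E] {U : Set 𝕜} (hU : IsOpen U) {t : 𝕜} (ht : t ∈ U)
    {f F : 𝕜 → E} {F' : E} (hf : ∀ s ∈ U, HasDerivAt f (F s) s) (hF : HasDerivAt F F' t) :
    deriv (deriv f) t = F' := by
  have hderiv : deriv f =ᶠ[nhds t] F := by
    filter_upwards [hU.mem_nhds ht] with s hs using (hf s hs).deriv
  rw [hderiv.deriv_eq, hF.deriv]

theorem HasDerivAt.itsProkhorovF {θinf t f' g' : ℂ} {f g : ℂ → ℂ} (hf : HasDerivAt f f' t)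
    (hg : HasDerivAt g g' t) (ht : t ≠ 0) :
    HasDerivAt (fun s => itsProkhorovF θinf s (f s) (g s))
      (((8 * f t * f' * g t + 4 * f t ^ 2 * g' + 2 - 2 * f t ^ 2 - 4 * t * f t * f'
          + (4 * θinf - 1) * f') * t
        - (4 * f t ^ 2 * g t + 2 * t - 2 * t * f t ^ 2 + (4 * θinf - 1) * f t)) / t ^ 2) t := by
  have hnum : HasDerivAt
      (fun s => 4 * f s ^ 2 * g s + 2 * s - 2 * s * f s ^ 2 + (4 * θinf - 1) * f s)
      (8 * f t * f' * g t + 4 * f t ^ 2 * g' + 2 - 2 * f t ^ 2 - 4 * t * f t * f'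
        + (4 * θinf - 1) * f') t := by
    refine (((((hf.fun_pow 2).const_mul 4).mul hg).add ((hasDerivAt_id' t).const_mul 2)).sub
      (((hasDerivAt_id' t).const_mul 2).mul (hf.fun_pow 2)) |>.add
        (hf.const_mul (4 * θinf - 1))).congr_deriv ?_
    push_cast
    ring
  exact (hnum.div (hasDerivAt_id' t) ht).congr_deriv (by ring)

theorem itsProkhorovF_deriv_eq_painleveIIIRhs (θ₀ θinf t x y : ℂ) (hx : x ≠ 0) (ht : t ≠ 0) :
    let x' := itsProkhorovF θinf t x y
    let y' := itsProkhorovG θ₀ θinf t x y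
    ((8 * x * x' * y + 4 * x ^ 2 * y' + 2 - 2 * x ^ 2 - 4 * t * x * x'
        + (4 * θinf - 1) * x') * t
      - (4 * x ^ 2 * y + 2 * t - 2 * t * x ^ 2 + (4 * θinf - 1) * x)) / t ^ 2
      = painleveIIIRhs (8 * θ₀) (4 - 8 * θinf) 4 (-4) t x x' := by
  simp only [itsProkhorovF, itsProkhorovG, painleveIIIRhs]
  field_simp
  ring

/-- Solutions of the Its–Prokhorov Hamiltonian system for PIII give
solutions of the third Painlevé equation with parameters
`α = 8θ₀`, `β = 4 − 8θ∞`, `γ = 4`, `δ = −4`. -/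
theorem IP_system_gives_PIII (θ₀ θinf : ℂ) (U : Set ℂ)
    (hU : IsOpen U) (hU0 : (0 : ℂ) ∉ U) (f g : ℂ → ℂ)
    (hf : ∀ t ∈ U, HasDerivAt f
      ((4 * (f t) ^ 2 * g t + 2 * t - 2 * t * (f t) ^ 2 + (4 * θinf - 1) * f t) / t) t)
    (hg : ∀ t ∈ U, HasDerivAt g
      (-((4 * f t * (g t) ^ 2 + (4 * θinf - 1 - 4 * t * f t) * g t
        - 2 * t * (θ₀ + θinf)) / t)) t)
    (hfne : ∀ t ∈ U, f t ≠ 0) :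
    ∀ t ∈ U, deriv (deriv f) t =
      (deriv f t) ^ 2 / f t - deriv f t / t
        + ((8 * θ₀) * (f t) ^ 2 + (4 - 8 * θinf)) / t
        + 4 * (f t) ^ 3 + (-4) / f t := by
  intro t ht
  have ht0 : t ≠ 0 := fun h => hU0 (h ▸ ht)
  have hft : HasDerivAt f (itsProkhorovF θinf t (f t) (g t)) t := hf t ht
  have hgt : HasDerivAt g (itsProkhorovG θ₀ θinf t (f t) (g t)) t := hg t ht
  rw [deriv_deriv_eq_of_hasDerivAt (F := fun s => itsProkhorovF θinf s (f s) (g s)) hU ht hf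
    (hft.itsProkhorovF hgt ht0), hft.deriv]
  exact itsProkhorovF_deriv_eq_painleveIIIRhs θ₀ θinf t (f t) (g t) (hfne t ht) ht0
end

section
/- Let a₁, a₂ be complex constants and let V ⊆ ℂ be an open set not containing 0. Suppose q, p : ℂ → ℂ are differentiable on V, satisfy the KNY system q'(s) = (2 p q² − q² + (a₁+a₂) q + s)/s and p'(s) = −(2 p(p−1) q + (a₁+a₂) p − a₂)/s on V, and q(s) ≠ 0 on V. Let U ⊆ ℂ be an open set of points t ≠ 0 with t² ∈ V, and define on U: x(t) = q(t²)/t and y(t) = t(8 p(t²) q(t²)² − 4 q(t²)² − 2(1 − 2a₁ − 2a₂) q(t²) + 4 t²)/(2 q(t²)²). Then x, y satisfy the Filipuk–Żołądek system x'(t) = x² y/t, y'(t) = α − x y²/t + β/x² + 4 t x − 4 t/x³ on U, with α = −4(a₁ − a₂), β = 4(1 − a₁ − a₂). -/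
/-!
Write `Q(t) = q(t²)`, `P(t) = p(t²)`. By the chain rule `Q, P` solve the KNY system with the
right-hand sides multiplied by `2t`, and `x = Q/t`, `y` are rational in `t, Q, P`. Both FZ equations
are then identities of rational functions in `t, Q, P` once `Q'` and `P'` are substituted. The
first one is essentially the definition of `y`: the numerator of `y` equals `2tQ' − 2Q`, so
`y = t x' / x²`.
-/

open Filter Topology

noncomputable section

def knyFieldQ (a₁ a₂ s q p : ℂ) : ℂ :=
  (2 * p * q ^ 2 - q ^ 2 + (a₁ + a₂) * q + s) / s

def knyFieldP (a₁ a₂ s q p : ℂ) : ℂ :=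
  -((2 * p * (p - 1) * q + (a₁ + a₂) * p - a₂) / s)

/-- `y(t)`, with `q`, `p` standing for `q(t²)`, `p(t²)`. -/
def fzCoordY (a₁ a₂ t q p : ℂ) : ℂ :=
  t * (8 * p * q ^ 2 - 4 * q ^ 2 - 2 * (1 - 2 * a₁ - 2 * a₂) * q + 4 * t ^ 2) / (2 * q ^ 2)

end

theorem HasDerivAt.comp_sq {f : ℂ → ℂ} {f' t : ℂ} (hf : HasDerivAt f f' (t ^ 2)) :
    HasDerivAt (fun u => f (u ^ 2)) (f' * (2 * t)) t :=
  hf.comp t (by simpa using hasDerivAt_pow 2 t)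

section PulledBack

variable {a₁ a₂ t : ℂ} {Q P : ℂ → ℂ}

theorem hasDerivAt_div_id_of_kny
    (hQ : HasDerivAt Q (knyFieldQ a₁ a₂ (t ^ 2) (Q t) (P t) * (2 * t)) t)
    (ht : t ≠ 0) (hQ0 : Q t ≠ 0) :
    HasDerivAt (fun u => Q u / u) ((Q t / t) ^ 2 * fzCoordY a₁ a₂ t (Q t) (P t) / t) t := by
  refine (hQ.fun_div (hasDerivAt_id' t) ht).congr_deriv ?_
  simp only [knyFieldQ, fzCoordY]
  field_simp
  ring

theorem hasDerivAt_fzCoordY_of_kny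
    (hQ : HasDerivAt Q (knyFieldQ a₁ a₂ (t ^ 2) (Q t) (P t) * (2 * t)) t)
    (hP : HasDerivAt P (knyFieldP a₁ a₂ (t ^ 2) (Q t) (P t) * (2 * t)) t)
    (ht : t ≠ 0) (hQ0 : Q t ≠ 0) :
    HasDerivAt (fun u => fzCoordY a₁ a₂ u (Q u) (P u))
      ((-4 * (a₁ - a₂)) - Q t / t * (fzCoordY a₁ a₂ t (Q t) (P t)) ^ 2 / t
        + (4 * (1 - a₁ - a₂)) / (Q t / t) ^ 2 + 4 * t * (Q t / t)
        - 4 * t / (Q t / t) ^ 3) t := by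
  have hNum := (hasDerivAt_id' t).fun_mul
    ((((hP.const_mul 8).fun_mul (hQ.fun_pow 2)).fun_sub ((hQ.fun_pow 2).const_mul 4)).fun_sub
      (hQ.const_mul (2 * (1 - 2 * a₁ - 2 * a₂))) |>.fun_add ((hasDerivAt_pow 2 t).const_mul 4))
  refine (hNum.fun_div ((hQ.fun_pow 2).const_mul 2) (by simp [hQ0])).congr_deriv ?_
  simp only [knyFieldQ, knyFieldP, fzCoordY]
  field_simp
  ring

end PulledBack

theorem KNY_to_FZ_general (a₁ a₂ : ℂ) (V : Set ℂ)
    (q p : ℂ → ℂ)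
    (hq : ∀ s ∈ V, HasDerivAt q
      ((2 * p s * (q s) ^ 2 - (q s) ^ 2 + (a₁ + a₂) * q s + s) / s) s)
    (hp : ∀ s ∈ V, HasDerivAt p
      (-((2 * p s * (p s - 1) * q s + (a₁ + a₂) * p s - a₂) / s)) s)
    (hqne : ∀ s ∈ V, q s ≠ 0)
    (U : Set ℂ) (hU : IsOpen U) (hUV : ∀ t ∈ U, t ≠ 0 ∧ t ^ 2 ∈ V)
    (x y : ℂ → ℂ)
    (hx : ∀ t ∈ U, x t = q (t ^ 2) / t)
    (hy : ∀ t ∈ U, y t =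
      t * (8 * p (t ^ 2) * (q (t ^ 2)) ^ 2 - 4 * (q (t ^ 2)) ^ 2
        - 2 * (1 - 2 * a₁ - 2 * a₂) * q (t ^ 2) + 4 * t ^ 2) / (2 * (q (t ^ 2)) ^ 2)) :
    ∀ t ∈ U,
      HasDerivAt x ((x t) ^ 2 * y t / t) t ∧
      HasDerivAt y ((-4 * (a₁ - a₂)) - x t * (y t) ^ 2 / t
        + (4 * (1 - a₁ - a₂)) / (x t) ^ 2 + 4 * t * x t - 4 * t / (x t) ^ 3) t := by
  intro t ht
  obtain ⟨ht0, hsV⟩ := hUV t ht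
  have hq0 : q (t ^ 2) ≠ 0 := hqne _ hsV
  have hx' := hasDerivAt_div_id_of_kny (Q := fun u => q (u ^ 2)) (P := fun u => p (u ^ 2))
    (hq _ hsV).comp_sq ht0 hq0
  have hy' := hasDerivAt_fzCoordY_of_kny (Q := fun u => q (u ^ 2)) (P := fun u => p (u ^ 2))
    (hq _ hsV).comp_sq (hp _ hsV).comp_sq ht0 hq0
  have hxU : x =ᶠ[𝓝 t] fun u => q (u ^ 2) / u :=
    eventually_of_mem (hU.mem_nhds ht) hx
  have hyU : y =ᶠ[𝓝 t] fun u => fzCoordY a₁ a₂ u (q (u ^ 2)) (p (u ^ 2)) :=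
    eventually_of_mem (hU.mem_nhds ht) hy
  rw [hxU.eq_of_nhds, hyU.eq_of_nhds]
  exact ⟨hx'.congr_of_eventuallyEq hxU, hy'.congr_of_eventuallyEq hyU⟩

/-- Under `x(t) = q(t²)/t`,
`y(t) = t(8pq² − 4q² − 2(1−2a₁−2a₂)q + 4t²)/(2q²)` (evaluated at `s = t²`),
solutions of the KNY system are mapped to solutions of the Filipuk–Żołądek
system with `α = −4(a₁ − a₂)`, `β = 4(1 − a₁ − a₂)`, `γ = 4`, `δ = −4`. -/
theorem KNY_to_FZ (a₁ a₂ : ℂ) (V : Set ℂ)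
    (hV : IsOpen V) (hV0 : (0 : ℂ) ∉ V) (q p : ℂ → ℂ)
    (hq : ∀ s ∈ V, HasDerivAt q
      ((2 * p s * (q s) ^ 2 - (q s) ^ 2 + (a₁ + a₂) * q s + s) / s) s)
    (hp : ∀ s ∈ V, HasDerivAt p
      (-((2 * p s * (p s - 1) * q s + (a₁ + a₂) * p s - a₂) / s)) s)
    (hqne : ∀ s ∈ V, q s ≠ 0)
    (U : Set ℂ) (hU : IsOpen U) (hUV : ∀ t ∈ U, t ≠ 0 ∧ t ^ 2 ∈ V)
    (x y : ℂ → ℂ)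
    (hx : ∀ t ∈ U, x t = q (t ^ 2) / t)
    (hy : ∀ t ∈ U, y t =
      t * (8 * p (t ^ 2) * (q (t ^ 2)) ^ 2 - 4 * (q (t ^ 2)) ^ 2
        - 2 * (1 - 2 * a₁ - 2 * a₂) * q (t ^ 2) + 4 * t ^ 2) / (2 * (q (t ^ 2)) ^ 2)) :
    ∀ t ∈ U,
      HasDerivAt x ((x t) ^ 2 * y t / t) t ∧
      HasDerivAt y ((-4 * (a₁ - a₂)) - x t * (y t) ^ 2 / t
        + (4 * (1 - a₁ - a₂)) / (x t) ^ 2 + 4 * t * x t - 4 * t / (x t) ^ 3) t :=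
  KNY_to_FZ_general a₁ a₂ V q p hq hp hqne U hU hUV x y hx hy
end

section
/- Let U ⊆ ℂ be an open set not containing 0. Suppose x, y : ℂ → ℂ are differentiable on U, satisfy the Filipuk–Żołądek system x'(t) = x² y/t and y'(t) = −8 − x y²/t + 8/x² (i.e. the case α = −8, β = 8, γ = 0, δ = 0) on U, and x(t) ≠ 0 on U. Suppose q, p : ℂ → ℂ are differentiable functions with q(t²) = t x(t) and p(t²) = (x(t) y(t) − 1)/(4 t x(t)) for all t ∈ U. Then for all s = t² with t ∈ U, q and p satisfy the Hamiltonian system associated to the degenerate (surface type D₈⁽¹⁾) KNY Hamiltonian K₂(q,p,s) = (q² p² + q p + q + s/q)/s, namely q'(s) = (2 q² p + q)/s and p'(s) = −(2 q p² + p + 1 − s/q²)/s. -/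
/-!
Differentiating `q (t ^ 2) = t * x t` and `p (t ^ 2) = (x t * y t - 1) / (4 * t * x t)` in `t`
gives `2 t q'(t²)` and `2 t p'(t²)` in terms of `x`, `y` and their derivatives; substituting the
Filipuk–Żołądek equations, both become rational functions of `t`, `x t`, `y t`, and so does the
right-hand side of the Hamiltonian system after substituting `q` and `p`. The two sides then
agree as rational identities, valid since `t ≠ 0` and `x t ≠ 0`.
-/

open Filter Topology

theorem HasDerivAt.of_comp_eventuallyEq {𝕜 : Type*} [NontriviallyNormedField 𝕜]
    {f g φ : 𝕜 → 𝕜} {t g' φ' : 𝕜} (hf : DifferentiableAt 𝕜 f (φ t))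
    (hφ : HasDerivAt φ φ' t) (hφ' : φ' ≠ 0) (hfg : (fun u => f (φ u)) =ᶠ[𝓝 t] g)
    (hg : HasDerivAt g g' t) : HasDerivAt f (g' / φ') (φ t) := by
  have hchain : HasDerivAt g (_root_.deriv f (φ t) * φ') t :=
    (hf.hasDerivAt.comp t hφ).congr_of_eventuallyEq hfg.symm
  rw [← hchain.unique hg, mul_div_cancel_right₀ _ hφ']
  exact hf.hasDerivAt

section FilipukZoladek

variable {x y : ℂ → ℂ} {t : ℂ}

theorem hasDerivAt_id_mul_of_FZ (hx : HasDerivAt x (x t ^ 2 * y t / t) t) (ht : t ≠ 0) :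
    HasDerivAt (fun u => u * x u) (x t + x t ^ 2 * y t) t := by
  refine ((hasDerivAt_id' t).mul hx).congr_deriv ?_
  field_simp

theorem hasDerivAt_FZ_momentum (hx : HasDerivAt x (x t ^ 2 * y t / t) t)
    (hy : HasDerivAt y (-8 - x t * y t ^ 2 / t + 8 / x t ^ 2) t) (ht : t ≠ 0) (hx0 : x t ≠ 0) :
    HasDerivAt (fun u => (x u * y u - 1) / (4 * u * x u))
      ((8 * t * (1 - x t ^ 2) - x t * (x t ^ 2 * y t ^ 2 - 1)) / (4 * t ^ 2 * x t ^ 2)) t := by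
  have hnum : HasDerivAt (fun u => x u * y u - 1) (8 / x t - 8 * x t) t := by
    refine ((hx.mul hy).sub_const 1).congr_deriv ?_
    field_simp
    ring
  have hden : HasDerivAt (fun u => 4 * u * x u) (4 * x t + 4 * x t ^ 2 * y t) t := by
    refine (((hasDerivAt_id' t).const_mul 4).mul hx).congr_deriv ?_
    field_simp
  refine (hnum.div hden (by simp [ht, hx0])).congr_deriv ?_
  field_simp
  ring

end FilipukZoladek

/-- Under `s = t²`, `q(t²) = t x(t)`, `p(t²) = (xy − 1)/(4tx)`,
solutions of the Filipuk–Żołądek system with `α = −8`, `β = 8`, `γ = δ = 0`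
are mapped to solutions of the system with degenerate (surface type `D₈⁽¹⁾`)
KNY Hamiltonian `K₂ = (q²p² + qp + q + s/q)/s`. -/
theorem FZ_to_degenerate_KNY_D8
    (U : Set ℂ) (hU : IsOpen U) (hU0 : (0 : ℂ) ∉ U) (x y : ℂ → ℂ)
    (hx : ∀ t ∈ U, HasDerivAt x ((x t) ^ 2 * y t / t) t)
    (hy : ∀ t ∈ U, HasDerivAt y (-8 - x t * (y t) ^ 2 / t + 8 / (x t) ^ 2) t)
    (hxne : ∀ t ∈ U, x t ≠ 0)
    (q p : ℂ → ℂ)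
    (hqd : ∀ t ∈ U, DifferentiableAt ℂ q (t ^ 2))
    (hpd : ∀ t ∈ U, DifferentiableAt ℂ p (t ^ 2))
    (hq : ∀ t ∈ U, q (t ^ 2) = t * x t)
    (hp : ∀ t ∈ U, p (t ^ 2) = (x t * y t - 1) / (4 * t * x t)) :
    ∀ t ∈ U, ∀ s, s = t ^ 2 →
      HasDerivAt q ((2 * (q s) ^ 2 * p s + q s) / s) s ∧
      HasDerivAt p (-((2 * q s * (p s) ^ 2 + p s + 1 - s / (q s) ^ 2) / s)) s := by
  rintro t ht s rfl
  have ht0 : t ≠ 0 := fun h => hU0 (h ▸ ht)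
  have hx0 := hxne t ht
  have hsq : HasDerivAt (fun u : ℂ => u ^ 2) (2 * t) t := by
    simpa using hasDerivAt_pow 2 t
  have h2t : (2 : ℂ) * t ≠ 0 := mul_ne_zero two_ne_zero ht0
  have hqt : (fun u => q (u ^ 2)) =ᶠ[𝓝 t] fun u => u * x u :=
    eventually_of_mem (hU.mem_nhds ht) hq
  have hpt : (fun u => p (u ^ 2)) =ᶠ[𝓝 t] fun u => (x u * y u - 1) / (4 * u * x u) :=
    eventually_of_mem (hU.mem_nhds ht) hp
  constructor
  · refine (HasDerivAt.of_comp_eventuallyEq (hqd t ht) hsq h2t hqt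
      (hasDerivAt_id_mul_of_FZ (hx t ht) ht0)).congr_deriv ?_
    rw [hq t ht, hp t ht]
    field_simp
    ring
  · refine (HasDerivAt.of_comp_eventuallyEq (hpd t ht) hsq h2t hpt
      (hasDerivAt_FZ_momentum (hx t ht) (hy t ht) ht0 hx0)).congr_deriv ?_
    rw [hq t ht, hp t ht]
    field_simp
    ring
end
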